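/- arXiv:2412.03852 — 3 statements merged into one kernel-verified Lean document; each statement's English description precedes it below -/
import Mathlib

section
/- Let {A(n)}_{n≥1} be a bounded sequence in a Hilbert space ℋ and let 𝒫 be a set of primes of positive relative density within the primes. If for all distinct p, q ∈ 𝒫 one has lim_{N→∞} (1/N)∑_{n=1}^N ⟨A(pn), A(qn)⟩ = 0, then lim_{N→∞} ‖(1/N)∑_{n=1}^N A(n)‖ = 0. -/
/-!
Fix a finite set `Q ⊆ 𝒫`, let `ω(n)` be the number of `p ∈ Q` dividing `n` and `L = ∑_{p ∈ Q} 1/p`.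
By the Turán–Kubilius inequality `∑_{n ≤ N} (ω(n) - L)² ≤ NL + 2L|Q|`, so by Cauchy–Schwarz
`L ∑_{n ≤ N} A(n)` is `∑_{n ≤ N} ω(n) A(n) = ∑_{m ≤ N} ∑_{p ∈ Q, pm ≤ N} A(pm)` up to `O(N √L)`.
Cauchy–Schwarz in `m` bounds the square norm of the latter by `N ∑_{p, q ∈ Q} ∑_{m ≤ N / max(p, q)}
⟨A(pm), A(qm)⟩`, whose diagonal is `O(NL)` and whose off-diagonal part is `o(N)` by hypothesis.
So the averages are eventually `O(1/√L)`, and `L` can be taken arbitrarily large: by Abel summation,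
positive relative density transfers the divergence of `∑ 1/p` over all primes to `𝒫`.
-/

open Filter Topology Finset

theorem sum_Icc_filter_eq_sum_card_mul_sub_add {R : Type*} [CommRing R] (S : ℕ → Prop)
    [DecidablePred S] (f : ℕ → R) (N : ℕ) :
    ∑ k ∈ Icc 1 N with S k, f k =
      ∑ n ∈ Icc 1 N, (#{k ∈ Icc 1 n | S k} : R) * (f n - f (n + 1))
        + #{k ∈ Icc 1 N | S k} * f (N + 1) := by
  induction N with
  | zero => simp
  | succ N ih =>
    have hcard : (#{k ∈ Icc 1 (N + 1) | S k} : R) =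
        #{k ∈ Icc 1 N | S k} + if S (N + 1) then 1 else 0 := by
      rw [card_filter, card_filter, sum_Icc_succ_top (by omega)]
      push_cast
      rfl
    rw [sum_filter, sum_Icc_succ_top (by omega), ← sum_filter, ih, sum_Icc_succ_top (by omega),
      hcard]
    split_ifs <;> ring

noncomputable def invSum (Q : Finset ℕ) : ℝ := ∑ p ∈ Q, (p : ℝ)⁻¹

theorem invSum_Icc_filter_eq (S : ℕ → Prop) [DecidablePred S] (N : ℕ) :
    invSum {k ∈ Icc 1 N | S k} =
      ∑ n ∈ Icc 1 N, (#{k ∈ Icc 1 n | S k} : ℝ) * ((n : ℝ)⁻¹ - ((n + 1 : ℕ) : ℝ)⁻¹)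
        + #{k ∈ Icc 1 N | S k} * ((N + 1 : ℕ) : ℝ)⁻¹ :=
  sum_Icc_filter_eq_sum_card_mul_sub_add S (fun n => (n : ℝ)⁻¹) N

theorem card_Icc_filter_mul_inv_succ_le_one (S : ℕ → Prop) [DecidablePred S] (N : ℕ) :
    (#{k ∈ Icc 1 N | S k} : ℝ) * ((N + 1 : ℕ) : ℝ)⁻¹ ≤ 1 := by
  rw [← div_eq_mul_inv, div_le_one (by positivity)]
  exact_mod_cast (card_filter_le _ _).trans (by simp)

theorem tendsto_invSum_Icc_filter_of_eventually_le {S T : ℕ → Prop} [DecidablePred S]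
    [DecidablePred T] {κ : ℝ} (hκ : 0 < κ)
    (hST : ∀ᶠ n in atTop, κ * #{k ∈ Icc 1 n | T k} ≤ (#{k ∈ Icc 1 n | S k} : ℝ))
    (hT : Tendsto (fun N => invSum {k ∈ Icc 1 N | T k}) atTop atTop) :
    Tendsto (fun N => invSum {k ∈ Icc 1 N | S k}) atTop atTop := by
  set Δ : ℕ → ℝ := fun n => (n : ℝ)⁻¹ - ((n + 1 : ℕ) : ℝ)⁻¹
  have hΔ : ∀ n, 0 < n → 0 ≤ Δ n := fun n hn =>
    sub_nonneg.2 (inv_anti₀ (by positivity) (by exact_mod_cast n.le_succ))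
  set g : ℕ → ℝ := fun N =>
    ∑ n ∈ Icc 1 N, (#{k ∈ Icc 1 n | S k} - κ * #{k ∈ Icc 1 n | T k}) * Δ n
  obtain ⟨N₀, hN₀⟩ := eventually_atTop.1 hST
  have hg : ∀ N ≥ N₀, g N₀ ≤ g N := by
    refine Nat.le_induction le_rfl fun N hN ih => ?_
    rw [show g (N + 1) = g N + _ from sum_Icc_succ_top (by omega) _]
    exact le_add_of_le_of_nonneg ih (mul_nonneg (sub_nonneg.2 (hN₀ _ (by omega))) (hΔ _ N.succ_pos))
  have hlower : ∀ N ≥ N₀,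
      κ * (invSum {k ∈ Icc 1 N | T k} - 1) + g N₀ ≤ invSum {k ∈ Icc 1 N | S k} := by
    intro N hN
    have hgN : g N = ∑ n ∈ Icc 1 N, (#{k ∈ Icc 1 n | S k} : ℝ) * Δ n
        - κ * ∑ n ∈ Icc 1 N, (#{k ∈ Icc 1 n | T k} : ℝ) * Δ n := by
      simp only [g, sub_mul, sum_sub_distrib, mul_sum, mul_assoc]
    have hStail : 0 ≤ (#{k ∈ Icc 1 N | S k} : ℝ) * ((N + 1 : ℕ) : ℝ)⁻¹ := by positivity
    have hTtail := mul_le_of_le_one_right hκ.le (card_Icc_filter_mul_inv_succ_le_one T N)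
    rw [invSum_Icc_filter_eq S, invSum_Icc_filter_eq T]
    linarith [hg N hN]
  refine tendsto_atTop_mono' _ (eventually_atTop.2 ⟨N₀, hlower⟩) ?_
  exact tendsto_atTop_add_const_right _ _
    ((tendsto_atTop_add_const_right _ _ hT).const_mul_atTop hκ)

theorem tendsto_invSum_Icc_filter_prime :
    Tendsto (fun N => invSum {k ∈ Icc 1 N | k.Prime}) atTop atTop := by
  have h := (not_summable_iff_tendsto_nat_atTop_of_nonneg fun n =>
    Set.indicator_nonneg (fun _ _ => by positivity) n).1 not_summable_one_div_on_primes
  refine tendsto_atTop_mono (fun N => ?_) h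
  simp only [Set.indicator_apply, ← sum_filter, one_div]
  refine sum_le_sum_of_subset_of_nonneg (fun k => ?_) (fun _ _ _ => by positivity)
  simp only [mem_filter, mem_range, mem_Icc]
  exact fun ⟨hk, hp⟩ => ⟨⟨hp.one_lt.le, hk.le⟩, hp⟩

theorem exists_finset_subset_le_invSum {P : Set ℕ} [DecidablePred (· ∈ P)] {δ : ℝ} (hδ : 0 < δ)
    (hdens : Tendsto (fun N => (#{k ∈ Icc 1 N | k ∈ P} : ℝ) / #{k ∈ Icc 1 N | k.Prime})
      atTop (𝓝 δ)) (b : ℝ) :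
    ∃ Q : Finset ℕ, ↑Q ⊆ P ∧ b ≤ invSum Q := by
  have hP : ∀ᶠ n in atTop, δ / 2 * #{k ∈ Icc 1 n | k.Prime} ≤ (#{k ∈ Icc 1 n | k ∈ P} : ℝ) := by
    filter_upwards [hdens.eventually (eventually_gt_nhds (half_lt_self hδ)),
      eventually_ge_atTop 2] with n hn h2
    have hpos : (0 : ℝ) < #{k ∈ Icc 1 n | k.Prime} :=
      Nat.cast_pos.2 (card_pos.2 ⟨2, by simp [Nat.prime_two]; omega⟩)
    exact ((lt_div_iff₀ hpos).1 hn).le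
  obtain ⟨N, hN⟩ := ((tendsto_invSum_Icc_filter_of_eventually_le (half_pos hδ) hP
    tendsto_invSum_Icc_filter_prime).eventually_ge_atTop b).exists
  exact ⟨_, fun k hk => (mem_filter.1 hk).2, hN⟩

def countDvd (Q : Finset ℕ) (n : ℕ) : ℕ := #{p ∈ Q | p ∣ n}

theorem card_Icc_filter_dvd (d N : ℕ) : #{n ∈ Icc 1 N | d ∣ n} = N / d := by
  rw [← zero_add 1, Icc_add_one_left_eq_Ioc, Nat.Ioc_filter_dvd_card_eq_div]

theorem sub_one_le_cast_div (N d : ℕ) : (N : ℝ) / d - 1 ≤ (N / d : ℕ) := by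
  rw [← Nat.floor_div_eq_div (K := ℝ)]
  exact (Nat.sub_one_lt_floor _).le

theorem sum_countDvd (Q : Finset ℕ) (N : ℕ) :
    ∑ n ∈ Icc 1 N, countDvd Q n = ∑ p ∈ Q, N / p := by
  simp only [countDvd, card_filter]
  rw [sum_comm]
  simp only [← card_filter, card_Icc_filter_dvd]

theorem sum_countDvd_sq (Q : Finset ℕ) (N : ℕ) :
    ∑ n ∈ Icc 1 N, countDvd Q n ^ 2 = ∑ p ∈ Q, ∑ q ∈ Q, #{n ∈ Icc 1 N | p ∣ n ∧ q ∣ n} := by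
  simp only [countDvd, card_filter, sq, sum_mul_sum, ite_zero_mul_ite_zero, mul_one]
  rw [sum_comm]
  refine sum_congr rfl fun p _ => ?_
  rw [sum_comm]

theorem card_Icc_filter_dvd_and_dvd_le {p q : ℕ} (hp : p.Prime) (hq : q.Prime) (N : ℕ) :
    (#{n ∈ Icc 1 N | p ∣ n ∧ q ∣ n} : ℝ) ≤ N / (p * q) + if p = q then (N : ℝ) / p else 0 := by
  by_cases hpq : p = q
  · subst hpq
    simp only [and_self, card_Icc_filter_dvd, if_true]
    exact le_add_of_nonneg_of_le (by positivity) Nat.cast_div_le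
  · have hcop := (Nat.coprime_primes hp hq).2 hpq
    have : {n ∈ Icc 1 N | p ∣ n ∧ q ∣ n} = {n ∈ Icc 1 N | p * q ∣ n} :=
      filter_congr fun n _ => ⟨fun h => hcop.mul_dvd_of_dvd_of_dvd h.1 h.2,
        fun h => ⟨(dvd_mul_right p q).trans h, (dvd_mul_left q p).trans h⟩⟩
    rw [this, card_Icc_filter_dvd, if_neg hpq, add_zero]
    exact_mod_cast Nat.cast_div_le

theorem sum_sq_countDvd_sub_invSum_le {Q : Finset ℕ} (hQ : ∀ p ∈ Q, p.Prime) (N : ℕ) :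
    ∑ n ∈ Icc 1 N, ((countDvd Q n : ℝ) - invSum Q) ^ 2 ≤ N * invSum Q + 2 * invSum Q * #Q := by
  set L := invSum Q
  have hL : 0 ≤ L := sum_nonneg fun _ _ => by positivity
  have hfirst : N * L - #Q ≤ ∑ n ∈ Icc 1 N, (countDvd Q n : ℝ) := by
    rw [← Nat.cast_sum, sum_countDvd, Nat.cast_sum]
    calc N * L - #Q = ∑ p ∈ Q, ((N : ℝ) / p - 1) := by
          simp [L, invSum, mul_sum, div_eq_mul_inv]
      _ ≤ _ := sum_le_sum fun p _ => sub_one_le_cast_div N p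
  have hsecond : ∑ n ∈ Icc 1 N, (countDvd Q n : ℝ) ^ 2 ≤ N * L ^ 2 + N * L := by
    have hcast : ∑ n ∈ Icc 1 N, (countDvd Q n : ℝ) ^ 2
        = ∑ p ∈ Q, ∑ q ∈ Q, (#{n ∈ Icc 1 N | p ∣ n ∧ q ∣ n} : ℝ) := by
      exact_mod_cast sum_countDvd_sq Q N
    rw [hcast]
    refine (sum_le_sum fun p hp => sum_le_sum fun q hq =>
      card_Icc_filter_dvd_and_dvd_le (hQ p hp) (hQ q hq) N).trans_eq ?_
    simp [L, invSum, sum_add_distrib, sq, mul_sum, sum_mul, div_eq_mul_inv]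
  have hexpand : ∑ n ∈ Icc 1 N, ((countDvd Q n : ℝ) - L) ^ 2 =
      ∑ n ∈ Icc 1 N, (countDvd Q n : ℝ) ^ 2 - 2 * L * ∑ n ∈ Icc 1 N, (countDvd Q n : ℝ)
        + N * L ^ 2 := by
    rw [sum_congr rfl fun n _ => show ((countDvd Q n : ℝ) - L) ^ 2 =
        (countDvd Q n : ℝ) ^ 2 - 2 * L * countDvd Q n + L ^ 2 by ring,
      sum_add_distrib, sum_sub_distrib, ← mul_sum, sum_const, Nat.card_Icc, add_tsub_cancel_right,
      nsmul_eq_mul]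
  rw [hexpand]
  linarith [mul_le_mul_of_nonneg_left hfirst (by positivity : (0 : ℝ) ≤ 2 * L)]

theorem norm_sum_sq_le_card_mul_sum_norm_sq {ι E : Type*} [SeminormedAddCommGroup E]
    (s : Finset ι) (x : ι → E) : ‖∑ i ∈ s, x i‖ ^ 2 ≤ #s * ∑ i ∈ s, ‖x i‖ ^ 2 :=
  (pow_le_pow_left₀ (norm_nonneg _) (norm_sum_le _ _) 2).trans sq_sum_le_card_mul_sum_sq

theorem sum_Icc_filter_dvd_eq {M : Type*} [AddCommMonoid M] {p : ℕ} (hp : 0 < p) (N : ℕ)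
    (f : ℕ → M) : ∑ n ∈ Icc 1 N with p ∣ n, f n = ∑ m ∈ Icc 1 N with p * m ≤ N, f (p * m) := by
  refine sum_nbij' (· / p) (p * ·) ?_ ?_ ?_ ?_ ?_ <;> intro n hn <;>
    simp only [mem_filter, mem_Icc] at hn ⊢
  · obtain ⟨⟨h1, hN⟩, k, rfl⟩ := hn
    rw [Nat.mul_div_cancel_left k hp]
    have : 1 ≤ k := Nat.pos_of_mul_pos_left h1
    exact ⟨⟨this, le_trans (Nat.le_mul_of_pos_left k hp) hN⟩, hN⟩
  · exact ⟨⟨Nat.mul_pos hp hn.1.1, hn.2⟩, dvd_mul_right p n⟩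
  · exact Nat.mul_div_cancel' hn.2
  · exact Nat.mul_div_cancel_left n hp
  · rw [Nat.mul_div_cancel' hn.2]

theorem Icc_filter_mul_le_and_mul_le {p : ℕ} (hp : 0 < p) (q N : ℕ) :
    {m ∈ Icc 1 N | p * m ≤ N ∧ q * m ≤ N} = Icc 1 (N / max p q) := by
  ext m
  simp only [mem_filter, mem_Icc, Nat.le_div_iff_mul_le (lt_max_of_lt_left hp)]
  rw [Nat.mul_comm m, max_mul_of_nonneg _ _ (Nat.zero_le m), max_le_iff]
  constructor
  · exact fun h => ⟨h.1.1, h.2⟩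
  · exact fun h => ⟨⟨h.1, le_trans (Nat.le_mul_of_pos_left m hp) h.2.1⟩, h.2⟩

theorem tendsto_norm_comp_div_div {E : Type*} [SeminormedAddCommGroup E] {u : ℕ → E}
    (hu : Tendsto (fun K : ℕ => ‖u K‖ / K) atTop (𝓝 0)) {d : ℕ} (hd : 0 < d) :
    Tendsto (fun N : ℕ => ‖u (N / d)‖ / N) atTop (𝓝 0) := by
  refine squeeze_zero' (Eventually.of_forall fun N => by positivity) ?_
    (hu.comp (Nat.tendsto_div_const_atTop hd.ne'))
  filter_upwards [eventually_ge_atTop d] with N hN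
  exact div_le_div_of_nonneg_left (norm_nonneg _) (Nat.cast_pos.2 (Nat.div_pos hN hd))
    (by exact_mod_cast Nat.div_le_self N d)

section Hilbert

open scoped InnerProductSpace

variable {H : Type*} [NormedAddCommGroup H] [InnerProductSpace ℂ H]

noncomputable def correlationSum (A : ℕ → H) (p q K : ℕ) : ℂ :=
  ∑ n ∈ Icc 1 K, ⟪A (p * n), A (q * n)⟫_ℂ

theorem re_correlationSum_self_le {A : ℕ → H} {C : ℝ} (hA : ∀ n, ‖A n‖ ≤ C) (p K : ℕ) :
    (correlationSum A p p K).re ≤ K * C ^ 2 := by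
  rw [correlationSum, Complex.re_sum]
  calc ∑ n ∈ Icc 1 K, (⟪A (p * n), A (p * n)⟫_ℂ).re ≤ ∑ n ∈ Icc 1 K, C ^ 2 :=
        sum_le_sum fun n _ => by
          rw [← RCLike.re_to_complex, inner_self_eq_norm_sq]
          exact pow_le_pow_left₀ (norm_nonneg _) (hA _) 2
    _ = K * C ^ 2 := by simp

variable (A : ℕ → H) {Q : Finset ℕ}

theorem sum_countDvd_smul_eq (hQ : ∀ p ∈ Q, 0 < p) (N : ℕ) :
    ∑ n ∈ Icc 1 N, (countDvd Q n : ℂ) • A n =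
      ∑ m ∈ Icc 1 N, ∑ p ∈ Q with p * m ≤ N, A (p * m) := by
  simp only [countDvd, card_filter, Nat.cast_sum, sum_smul, Nat.cast_ite, ite_smul, Nat.cast_one,
    one_smul, Nat.cast_zero, zero_smul]
  rw [sum_comm]
  simp only [← sum_filter]
  rw [sum_congr rfl fun p hp => sum_Icc_filter_dvd_eq (hQ p hp) N A]
  simp only [sum_filter]
  rw [sum_comm]

theorem sum_norm_sq_eq_re_sum_correlationSum (hQ : ∀ p ∈ Q, 0 < p) (N : ℕ) :
    ∑ m ∈ Icc 1 N, ‖∑ p ∈ Q with p * m ≤ N, A (p * m)‖ ^ 2 =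
      (∑ p ∈ Q, ∑ q ∈ Q, correlationSum A p q (N / max p q)).re := by
  have hexpand : ∀ m, ‖∑ p ∈ Q with p * m ≤ N, A (p * m)‖ ^ 2 =
      (∑ x ∈ Q ×ˢ Q with x.1 * m ≤ N ∧ x.2 * m ≤ N, ⟪A (x.1 * m), A (x.2 * m)⟫_ℂ).re := by
    intro m
    rw [filter_product (fun p => p * m ≤ N) (fun q => q * m ≤ N), sum_product,
      ← inner_self_eq_norm_sq (𝕜 := ℂ), RCLike.re_to_complex, sum_inner]
    simp only [inner_sum]
  rw [sum_congr rfl fun m _ => hexpand m, ← Complex.re_sum,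
    sum_comm' (t' := Q ×ˢ Q) (s' := fun x => {m ∈ Icc 1 N | x.1 * m ≤ N ∧ x.2 * m ≤ N})
      (by intro m x; simp only [mem_filter]; tauto), sum_product]
  refine congrArg Complex.re (sum_congr rfl fun p hp => sum_congr rfl fun q _ => ?_)
  rw [Icc_filter_mul_le_and_mul_le (hQ p hp)]
  rfl

theorem norm_sum_countDvd_smul_sq_le {C : ℝ} (hA : ∀ n, ‖A n‖ ≤ C) (hQ : ∀ p ∈ Q, 0 < p)
    (N : ℕ) : ‖∑ n ∈ Icc 1 N, (countDvd Q n : ℂ) • A n‖ ^ 2 ≤ N * (N * invSum Q * C ^ 2 +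
      ∑ p ∈ Q, ∑ q ∈ Q.erase p, ‖correlationSum A p q (N / max p q)‖) := by
  rw [sum_countDvd_smul_eq A hQ]
  refine (norm_sum_sq_le_card_mul_sum_norm_sq _ _).trans ?_
  rw [Nat.card_Icc, add_tsub_cancel_right, sum_norm_sq_eq_re_sum_correlationSum A hQ]
  gcongr
  rw [Complex.re_sum, invSum, mul_sum, sum_mul, ← sum_add_distrib]
  refine sum_le_sum fun p hp => ?_
  rw [← add_sum_erase _ _ hp, Complex.add_re, Complex.re_sum, max_self]
  gcongr ?_ + ?_
  · refine (re_correlationSum_self_le hA p _).trans ?_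
    rw [← div_eq_mul_inv]
    gcongr
    exact Nat.cast_div_le
  · exact sum_le_sum fun q _ => Complex.re_le_norm _

theorem norm_sum_sub_countDvd_smul_sq_le {C : ℝ} (hA : ∀ n, ‖A n‖ ≤ C)
    (hQ : ∀ p ∈ Q, p.Prime) (N : ℕ) :
    ‖∑ n ∈ Icc 1 N, ((invSum Q - countDvd Q n : ℝ) : ℂ) • A n‖ ^ 2 ≤
      N * C ^ 2 * (N * invSum Q + 2 * invSum Q * #Q) := by
  refine (norm_sum_sq_le_card_mul_sum_norm_sq _ _).trans ?_
  rw [Nat.card_Icc, add_tsub_cancel_right, mul_assoc]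
  gcongr
  calc ∑ n ∈ Icc 1 N, ‖((invSum Q - countDvd Q n : ℝ) : ℂ) • A n‖ ^ 2
      ≤ ∑ n ∈ Icc 1 N, C ^ 2 * ((countDvd Q n : ℝ) - invSum Q) ^ 2 :=
        sum_le_sum fun n _ => by
          rw [norm_smul, mul_pow, Complex.norm_real, Real.norm_eq_abs, sq_abs, ← neg_sub,
            neg_sq, mul_comm]
          gcongr
          exact hA n
    _ = C ^ 2 * ∑ n ∈ Icc 1 N, ((countDvd Q n : ℝ) - invSum Q) ^ 2 := (mul_sum _ _ _).symm
    _ ≤ C ^ 2 * (N * invSum Q + 2 * invSum Q * #Q) := by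
        gcongr
        exact sum_sq_countDvd_sub_invSum_le hQ N

theorem eventually_sum_norm_correlationSum_le (hQ : ∀ p ∈ Q, 0 < p)
    (horth : ∀ p ∈ Q, ∀ q ∈ Q, p ≠ q →
      Tendsto (fun K : ℕ => (K : ℂ)⁻¹ * correlationSum A p q K) atTop (𝓝 0))
    {η : ℝ} (hη : 0 < η) :
    ∀ᶠ N : ℕ in atTop,
      ∑ p ∈ Q, ∑ q ∈ Q.erase p, ‖correlationSum A p q (N / max p q)‖ ≤ η * N := by
  have hlim : Tendsto (fun N : ℕ =>
      (∑ p ∈ Q, ∑ q ∈ Q.erase p, ‖correlationSum A p q (N / max p q)‖) / N) atTop (𝓝 0) := by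
    simp only [sum_div]
    simpa using tendsto_finsetSum Q fun p hp => tendsto_finsetSum (Q.erase p) fun q hq =>
      tendsto_norm_comp_div_div (by simpa [div_eq_inv_mul] using
          (horth p hp q (mem_erase.1 hq).2 (mem_erase.1 hq).1.symm).norm)
        (lt_max_of_lt_left (hQ p hp))
  filter_upwards [hlim.eventually (eventually_le_nhds hη), eventually_gt_atTop 0] with N hN hN0
  rwa [div_le_iff₀ (by exact_mod_cast hN0)] at hN

theorem eventually_norm_inv_smul_sum_sq_le {C : ℝ} (hA : ∀ n, ‖A n‖ ≤ C) (hQ : ∀ p ∈ Q, p.Prime)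
    (hL : 0 < invSum Q)
    (horth : ∀ p ∈ Q, ∀ q ∈ Q, p ≠ q →
      Tendsto (fun K : ℕ => (K : ℂ)⁻¹ * correlationSum A p q K) atTop (𝓝 0)) :
    ∀ᶠ N : ℕ in atTop,
      ‖(N : ℂ)⁻¹ • ∑ n ∈ Icc 1 N, A n‖ ^ 2 ≤ 2 * (3 * C ^ 2 + 1) / invSum Q := by
  have hpos : ∀ p ∈ Q, 0 < p := fun p hp => (hQ p hp).pos
  set L := invSum Q
  filter_upwards [eventually_sum_norm_correlationSum_le A hpos horth hL,
    eventually_ge_atTop (2 * #Q), eventually_gt_atTop 0] with N hoff hQN hN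
  set W := ∑ n ∈ Icc 1 N, (countDvd Q n : ℂ) • A n
  set R := ∑ n ∈ Icc 1 N, ((L - countDvd Q n : ℝ) : ℂ) • A n
  have hdecomp : (L : ℂ) • ∑ n ∈ Icc 1 N, A n = W + R := by
    rw [← sum_add_distrib, smul_sum]
    refine sum_congr rfl fun n _ => ?_
    rw [← add_smul]
    push_cast
    ring_nf
  have hW := norm_sum_countDvd_smul_sq_le A hA hpos N
  have hR := norm_sum_sub_countDvd_smul_sq_le A hA hQ N
  have hQN' : (2 * #Q : ℝ) ≤ N := by exact_mod_cast hQN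
  have hsq : L ^ 2 * ‖∑ n ∈ Icc 1 N, A n‖ ^ 2 ≤ 2 * (3 * C ^ 2 + 1) * L * N ^ 2 :=
    calc L ^ 2 * ‖∑ n ∈ Icc 1 N, A n‖ ^ 2 = ‖W + R‖ ^ 2 := by
          rw [← hdecomp, norm_smul, Complex.norm_real, Real.norm_eq_abs, abs_of_pos hL, mul_pow]
      _ ≤ (‖W‖ + ‖R‖) ^ 2 := by gcongr; exact norm_add_le _ _
      _ ≤ 2 * (‖W‖ ^ 2 + ‖R‖ ^ 2) := add_sq_le
      _ ≤ 2 * (N * (N * L * C ^ 2 + L * N) + N * C ^ 2 * (N * L + 2 * L * #Q)) := by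
          gcongr
          exact hW.trans (by gcongr)
      _ ≤ 2 * (3 * C ^ 2 + 1) * L * N ^ 2 := by
          nlinarith [mul_le_mul_of_nonneg_left hQN' (by positivity : (0 : ℝ) ≤ N * C ^ 2 * L)]
  rw [norm_smul, norm_inv, Complex.norm_natCast, mul_pow, inv_pow, ← div_eq_inv_mul,
    div_le_div_iff₀ (by positivity) hL]
  exact le_of_mul_le_mul_left (by linarith) hL

end Hilbert

open scoped Classical

theorem stmt2_general {H : Type*} [NormedAddCommGroup H] [InnerProductSpace ℂ H]
    (A : ℕ → H) (C : ℝ) (hbdd : ∀ n, ‖A n‖ ≤ C)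
    (PP : Set ℕ) (hPP : ∀ p ∈ PP, Nat.Prime p)
    (δ : ℝ) (hδ : 0 < δ)
    (hdens : Tendsto
      (fun N : ℕ =>
        (((Finset.Icc 1 N).filter (· ∈ PP)).card : ℝ) /
          (((Finset.Icc 1 N).filter Nat.Prime).card : ℝ))
      atTop (nhds δ))
    (horth : ∀ p ∈ PP, ∀ q ∈ PP, p ≠ q →
      Tendsto (fun N : ℕ => (N : ℂ)⁻¹ * ∑ n ∈ Finset.Icc 1 N,
        (inner ℂ (A (p * n)) (A (q * n)) : ℂ)) atTop (nhds 0)) :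
    Tendsto (fun N : ℕ => ‖(N : ℂ)⁻¹ • ∑ n ∈ Finset.Icc 1 N, A n‖) atTop (nhds 0) := by
  rw [NormedAddGroup.tendsto_nhds_zero]
  intro ε hε
  set K := 2 * (3 * C ^ 2 + 1)
  obtain ⟨Q, hQP, hQL⟩ := exists_finset_subset_le_invSum hδ hdens (K / ε ^ 2 + 1)
  have hKL : K < invSum Q * ε ^ 2 :=
    (div_lt_iff₀ (pow_pos hε 2)).1 ((lt_add_one _).trans_le hQL)
  have hL : 0 < invSum Q := pos_of_mul_pos_left ((by positivity : 0 < K).trans hKL) (sq_nonneg ε)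
  filter_upwards [eventually_norm_inv_smul_sum_sq_le A hbdd (fun p hp => hPP p (hQP hp)) hL
    fun p hp q hq => horth p (hQP hp) q (hQP hq)] with N hN
  rw [norm_norm]
  exact lt_of_pow_lt_pow_left₀ 2 hε.le (hN.trans_lt ((div_lt_iff₀' hL).2 hKL))

theorem stmt2 {H : Type*} [NormedAddCommGroup H] [InnerProductSpace ℂ H] [CompleteSpace H]
    (A : ℕ → H) (C : ℝ) (hbdd : ∀ n, ‖A n‖ ≤ C)
    (PP : Set ℕ) (hPP : ∀ p ∈ PP, Nat.Prime p)
    (δ : ℝ) (hδ : 0 < δ)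
    (hdens : Tendsto
      (fun N : ℕ =>
        (((Finset.Icc 1 N).filter (· ∈ PP)).card : ℝ) /
          (((Finset.Icc 1 N).filter Nat.Prime).card : ℝ))
      atTop (nhds δ))
    (horth : ∀ p ∈ PP, ∀ q ∈ PP, p ≠ q →
      Tendsto (fun N : ℕ => (N : ℂ)⁻¹ * ∑ n ∈ Finset.Icc 1 N,
        (inner ℂ (A (p * n)) (A (q * n)) : ℂ)) atTop (nhds 0)) :
    Tendsto (fun N : ℕ => ‖(N : ℂ)⁻¹ • ∑ n ∈ Finset.Icc 1 N, A n‖) atTop (nhds 0) :=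
  stmt2_general A C hbdd PP hPP δ hδ hdens horth
end

section
/- Let P₁,…,P_k ∈ ℤ[n] be pairwise independent polynomials none of which has the form c·n^d + b. Then the set D = {(p,q) ∈ ℙ² : p ≠ q, and there exist 1 ≤ i ≤ j ≤ k and nonzero integers x, y such that x·P_i(pn) + y·P_j(qn) is the zero polynomial in n} is finite (possibly empty). -/
/-!
Let `P` have nonzero coefficients `a_m, a_{m'}` with `m < m'`, and let `b_t` be the coefficients
of `Q`. Comparing the coefficients of `n^m` and `n^{m'}` in `x P(pn) + y Q(qn) = 0` and eliminating
`x, y` gives `a_m b_{m'} q^{m'-m} = a_{m'} b_m p^{m'-m}`, with both products nonzero. For distinct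
primes `p, q` this forces `p ∣ a_m b_{m'}` and `q ∣ a_{m'} b_m`, so `p` and `q` are bounded in
terms of `P` and `Q` alone.
-/

open Polynomial

lemma exists_coeff_ne_zero_lt_of_ne_C_mul_X_pow {R : Type*} [Semiring R] {P : R[X]}
    (hP : ∀ (c : R) (d : ℕ), P ≠ C c * X ^ d) :
    ∃ m m' : ℕ, m < m' ∧ P.coeff m ≠ 0 ∧ P.coeff m' ≠ 0 := by
  have hcard : 1 < P.support.card := by
    by_contra! h
    obtain ⟨n, a, rfl⟩ := card_support_le_one_iff_monomial.mp h
    exact hP a n C_mul_X_pow_eq_monomial.symm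
  obtain ⟨m, hm, m', hm', hne⟩ := Finset.one_lt_card.mp hcard
  rw [mem_support_iff] at hm hm'
  rcases hne.lt_or_gt with h | h
  · exact ⟨m, m', h, hm, hm'⟩
  · exact ⟨m', m, h, hm', hm⟩

lemma prime_dvd_of_mul_pow_eq_mul_pow {p q d : ℕ} (hp : p.Prime) (hq : q.Prime) (hpq : p ≠ q)
    (hd : d ≠ 0) {u v : ℤ} (h : u * q ^ d = v * p ^ d) : (p : ℤ) ∣ u := by
  have hcop : IsCoprime (p : ℤ) ((q : ℤ) ^ d) :=
    (Nat.isCoprime_iff_coprime.mpr ((Nat.coprime_primes hp hq).mpr hpq)).pow_right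
  exact hcop.dvd_of_dvd_mul_right (h ▸ dvd_mul_of_dvd_right (dvd_pow_self _ hd) _)

lemma prime_le_of_C_mul_comp_add_C_mul_comp_eq_zero {P Q : ℤ[X]} {m m' : ℕ} (hmm' : m < m')
    (ha : P.coeff m ≠ 0) (ha' : P.coeff m' ≠ 0) {p q : ℕ} (hp : p.Prime) (hq : q.Prime)
    (hpq : p ≠ q) {x y : ℤ} (hx : x ≠ 0) (hy : y ≠ 0)
    (h : C x * P.comp (C (p : ℤ) * X) + C y * Q.comp (C (q : ℤ) * X) = 0) :
    p ≤ (P.coeff m * Q.coeff m').natAbs ∧ q ≤ (P.coeff m' * Q.coeff m).natAbs := by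
  have hcoeff (t : ℕ) : x * (P.coeff t * p ^ t) = -(y * (Q.coeff t * q ^ t)) := by
    have ht := congrArg (coeff · t) h
    simp only [coeff_add, coeff_C_mul, comp_C_mul_X_coeff, coeff_zero] at ht
    linarith
  have hb {t : ℕ} (ht : P.coeff t ≠ 0) : Q.coeff t ≠ 0 := fun hQ ↦ by
    simpa [hQ, hx, ht, hp.ne_zero] using hcoeff t
  obtain ⟨d, rfl⟩ := Nat.exists_eq_add_of_lt hmm'
  have cross : P.coeff m * Q.coeff (m + d + 1) * (q : ℤ) ^ (d + 1)
      = P.coeff (m + d + 1) * Q.coeff m * (p : ℤ) ^ (d + 1) := by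
    have hpq0 : x * y * ((p : ℤ) ^ m * (q : ℤ) ^ m) ≠ 0 := by
      have := hp.ne_zero; have := hq.ne_zero; positivity
    refine mul_left_cancel₀ hpq0 ?_
    linear_combination (y * Q.coeff (m + d + 1) * (q : ℤ) ^ (m + d + 1)) * hcoeff m
      - (y * Q.coeff m * (q : ℤ) ^ m) * hcoeff (m + d + 1)
  constructor
  · exact Nat.le_of_dvd (Int.natAbs_pos.mpr (mul_ne_zero ha (hb ha')))
      (Int.natCast_dvd.mp (prime_dvd_of_mul_pow_eq_mul_pow hp hq hpq d.succ_ne_zero cross))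
  · exact Nat.le_of_dvd (Int.natAbs_pos.mpr (mul_ne_zero ha' (hb ha)))
      (Int.natCast_dvd.mp
        (prime_dvd_of_mul_pow_eq_mul_pow hq hp hpq.symm d.succ_ne_zero cross.symm))

theorem finite_setOf_prime_pairs_C_mul_comp_add_C_mul_comp_eq_zero (P Q : ℤ[X])
    (hP : ∀ (c : ℤ) (d : ℕ), P ≠ C c * X ^ d) :
    {pq : ℕ × ℕ | pq.1.Prime ∧ pq.2.Prime ∧ pq.1 ≠ pq.2 ∧ ∃ x y : ℤ, x ≠ 0 ∧ y ≠ 0 ∧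
      C x * P.comp (C (pq.1 : ℤ) * X) + C y * Q.comp (C (pq.2 : ℤ) * X) = 0}.Finite := by
  obtain ⟨m, m', hmm', ha, ha'⟩ := exists_coeff_ne_zero_lt_of_ne_C_mul_X_pow hP
  refine ((Set.finite_Iic (P.coeff m * Q.coeff m').natAbs).prod
    (Set.finite_Iic (P.coeff m' * Q.coeff m).natAbs)).subset ?_
  rintro ⟨p, q⟩ ⟨hp, hq, hpq, x, y, hx, hy, h⟩
  exact prime_le_of_C_mul_comp_add_C_mul_comp_eq_zero hmm' ha ha' hp hq hpq hx hy h

theorem stmt12_general (k : ℕ) (P : Fin k → Polynomial ℤ)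
    (hform : ∀ i : Fin k, ¬ ∃ (c b : ℤ) (d : ℕ), P i = C c * X ^ d + C b) :
    Set.Finite {pq : ℕ × ℕ | pq.1.Prime ∧ pq.2.Prime ∧ pq.1 ≠ pq.2 ∧
      ∃ i j : Fin k, i ≤ j ∧ ∃ x y : ℤ, x ≠ 0 ∧ y ≠ 0 ∧
        C x * (P i).comp (C (pq.1 : ℤ) * X) + C y * (P j).comp (C (pq.2 : ℤ) * X) = 0} := by
  have hmono (i : Fin k) (c : ℤ) (d : ℕ) : P i ≠ C c * X ^ d :=
    fun h ↦ hform i ⟨c, 0, d, by simp [h]⟩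
  refine (Set.finite_iUnion fun i ↦ Set.finite_iUnion fun j ↦
    finite_setOf_prime_pairs_C_mul_comp_add_C_mul_comp_eq_zero (P i) (P j) (hmono i)).subset ?_
  rintro ⟨p, q⟩ ⟨hp, hq, hpq, i, j, -, x, y, hx, hy, h⟩
  exact Set.mem_iUnion₂.mpr ⟨i, j, hp, hq, hpq, x, y, hx, hy, h⟩

theorem stmt12 (k : ℕ) (hk : 0 < k) (P : Fin k → Polynomial ℤ)
    (hindep : ∀ i j : Fin k, i < j → ∀ x y : ℤ, x ≠ 0 → y ≠ 0 →
      ¬ ∃ c : ℤ, C x * P i + C y * P j = C c)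
    (hform : ∀ i : Fin k, ¬ ∃ (c b : ℤ) (d : ℕ), P i = C c * X ^ d + C b) :
    Set.Finite {pq : ℕ × ℕ | pq.1.Prime ∧ pq.2.Prime ∧ pq.1 ≠ pq.2 ∧
      ∃ i j : Fin k, i ≤ j ∧ ∃ x y : ℤ, x ≠ 0 ∧ y ≠ 0 ∧
        C x * (P i).comp (C (pq.1 : ℤ) * X) + C y * (P j).comp (C (pq.2 : ℤ) * X) = 0} :=
  stmt12_general k P hform
end

section
/- Let k ∈ ℕ and E ⊆ ℤ^k. Then there exist a probability space (X,𝒳,μ), commuting invertible measure preserving transformations T₁,…,T_k on X, and A ∈ 𝒳 with μ(A) = d*(E), such that for all m ∈ ℕ and all vectors d₁,…,d_m ∈ ℤ^k (with d_j = (d_{j,1},…,d_{j,k})): d*(E ∩ (E−d₁) ∩ ⋯ ∩ (E−d_m)) ≥ μ(A ∩ ∏_{i=1}^k T_i^{−d_{1,i}}A ∩ ⋯ ∩ ∏_{i=1}^k T_i^{−d_{m,i}}A). -/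
open MeasureTheory Filter Topology
open scoped Classical

/-- Upper Banach density of a subset of `ℤᵏ`, computed over cubic boxes. -/
noncomputable def upperBanachDensityZ {k : ℕ} (E : Set (Fin k → ℤ)) : ℝ :=
  Filter.limsup
    (fun N : ℕ => ⨆ a : Fin k → ℤ,
      (((Fintype.piFinset fun i => Finset.Ioc (a i) (a i + N)).filter (· ∈ E)).card : ℝ) /
        (N ^ k))
    Filter.atTop

/-!
Let `x = 1_E` in the shift space `ℤᵏ → Bool`. Choose an ultrafilter `𝒰 → ∞` along which the
maximal box densities `sup_a |E ∩ (a + (0, N]ᵏ)| / Nᵏ` converge to `d*(E)`, and for every `N` a box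
on which `E` is almost maximally dense. The `𝒰`-limit of the frequency with which the orbit of `x`
visits a set `S` over these boxes is finitely additive, and shift-invariant because boxes are Følner
sets; as a content on the compact space it extends to an invariant Borel probability measure. On
the clopen cylinder `A = {y | y 0 = true}` and its translates that measure counts the points of
`E ∩ (E - d₁) ∩ ⋯ ∩ (E - dₘ)` in the chosen boxes, whence `μ A = d*(E)` and the inequality.
-/

open scoped NNReal ENNReal

theorem Ultrafilter.tendsto_limUnder_of_mem_Icc {α : Type*} (𝒰 : Ultrafilter α) {f : α → ℝ}
    {a b : ℝ} (hf : ∀ x, f x ∈ Set.Icc a b) : Tendsto f 𝒰 (𝓝 (limUnder (𝒰 : Filter α) f)) := by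
  obtain ⟨L, -, hL⟩ := isCompact_Icc.ultrafilter_le_nhds (𝒰.map f)
    (Filter.le_principal_iff.2 (univ_mem' (s := f ⁻¹' Set.Icc a b) hf))
  exact tendsto_nhds_limUnder ⟨L, hL⟩

theorem exists_ultrafilter_tendsto_limsup {α β : Type*} [ConditionallyCompleteLinearOrder β]
    [TopologicalSpace β] [OrderTopology β] {l : Filter α} [l.NeBot] {f : α → β}
    (hc : IsCoboundedUnder (· ≤ ·) l f) (hb : IsBoundedUnder (· ≤ ·) l f) :
    ∃ 𝒰 : Ultrafilter α, ↑𝒰 ≤ l ∧ Tendsto f 𝒰 (𝓝 (limsup f l)) :=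
  mapClusterPt_iff_ultrafilter.1 (isGreatest_mapClusterPt_limsup hc hb).1

open Finset in
theorem Finset.card_filter_le_card_filter_add_card_sdiff {α : Type*} [DecidableEq α]
    (s t : Finset α) (p : α → Prop) [DecidablePred p] :
    #(s.filter p) ≤ #(t.filter p) + #(s \ t) := by
  calc #(s.filter p) ≤ #(t.filter p ∪ s \ t) := by
        refine Finset.card_le_card fun x hx => ?_
        simp only [Finset.mem_union, Finset.mem_filter, Finset.mem_sdiff] at hx ⊢
        tauto
    _ ≤ #(t.filter p) + #(s \ t) := Finset.card_union_le _ _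

theorem monotone_of_additive {X : Type*} {m : Set X → ℝ≥0}
    (hm : ∀ s t, Disjoint s t → m (s ∪ t) = m s + m t) : Monotone m := by
  intro s t h
  rw [← Set.union_sdiff_cancel h, hm _ _ Set.disjoint_sdiff_right]
  exact le_self_add

namespace MeasureTheory.Content

variable {X : Type*} [TopologicalSpace X]

def ofAdditive (m : Set X → ℝ≥0) (hm : ∀ s t, Disjoint s t → m (s ∪ t) = m s + m t) :
    Content X where
  toFun K := m K
  mono' _ _ h := monotone_of_additive hm h
  sup_disjoint' K₁ K₂ h _ _ := hm K₁ K₂ h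
  sup_le' K₁ K₂ := by
    change m (K₁ ∪ K₂) ≤ m K₁ + m K₂
    rw [← Set.union_sdiff_self, hm _ _ Set.disjoint_sdiff_right]
    gcongr
    exact monotone_of_additive hm Set.sdiff_subset

variable [MeasurableSpace X] [BorelSpace X] [T2Space X]
  {m : Set X → ℝ≥0} (hm : ∀ s t, Disjoint s t → m (s ∪ t) = m s + m t)

theorem ofAdditive_measure_apply [CompactSpace X] {s : Set X} (hs : IsClopen s) :
    (ofAdditive m hm).measure s = m s := by
  rw [Content.measure_apply _ hs.isOpen.measurableSet,
    outerMeasure_of_isOpen _ _ hs.isOpen, innerContent_of_isCompact _ hs.isClosed.isCompact]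
  rfl

theorem measurePreserving_ofAdditive (f : X ≃ₜ X) (hf : ∀ s, m (f '' s) = m s) :
    MeasurePreserving f (ofAdditive m hm).measure (ofAdditive m hm).measure := by
  refine ⟨f.measurable, Measure.ext fun s hs => ?_⟩
  rw [Measure.map_apply f.measurable hs, Content.measure_apply _ (f.measurable hs),
    Content.measure_apply _ hs]
  exact outerMeasure_preimage _ f (fun K => congrArg ((↑) : ℝ≥0 → ℝ≥0∞) (hf K)) s

end MeasureTheory.Content

namespace Furstenberg

section Shift

variable {G α : Type*} [AddCommGroup G]

def shift (u : G) (x : G → α) : G → α := fun g => x (g + u)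

theorem shift_zero : shift (0 : G) = (id : (G → α) → G → α) := by
  funext x g; simp [shift]

theorem shift_add (u v : G) : shift (u + v) = (shift u ∘ shift v : (G → α) → G → α) := by
  funext x g; simp [shift, add_assoc]

theorem shift_shift (u v : G) (x : G → α) : shift u (shift v x) = shift (u + v) x := by
  rw [shift_add]; rfl

theorem continuous_shift [TopologicalSpace α] (u : G) : Continuous (shift u : (G → α) → G → α) :=
  continuous_pi fun g => continuous_apply (g + u)

def shiftHomeomorph [TopologicalSpace α] (u : G) : (G → α) ≃ₜ (G → α) where
  toFun := shift u
  invFun := shift (-u)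
  left_inv x := by rw [shift_shift, neg_add_cancel, shift_zero, id]
  right_inv x := by rw [shift_shift, add_neg_cancel, shift_zero, id]
  continuous_toFun := continuous_shift u
  continuous_invFun := continuous_shift (-u)

end Shift

section Box

open Finset

variable {k : ℕ}

noncomputable def box (a : Fin k → ℤ) (N : ℕ) : Finset (Fin k → ℤ) :=
  Fintype.piFinset fun i => Ioc (a i) (a i + N)

theorem card_box (a : Fin k → ℤ) (N : ℕ) : #(box a N) = N ^ k := by
  simp [box, Fintype.card_piFinset, Int.card_Ioc]

theorem box_add (a u : Fin k → ℤ) (N : ℕ) :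
    box (a + u) N = (box a N).map (Equiv.addRight u).toEmbedding := by
  ext n
  simp only [mem_map_equiv, box, Fintype.mem_piFinset, mem_Ioc, Equiv.coe_addRight,
    Equiv.addRight_symm, Pi.add_apply, Pi.neg_apply]
  exact forall_congr' fun i => by omega

theorem box_sub_subset_inter_box_add (a u : Fin k → ℤ) {M : ℕ} (hM : ∀ i, |u i| ≤ M) (N : ℕ) :
    box (a + fun i => max (u i) 0) (N - M) ⊆ box a N ∩ box (a + u) N := by
  intro n hn
  simp only [mem_inter, box, Fintype.mem_piFinset, mem_Ioc, Pi.add_apply] at hn ⊢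
  refine ⟨fun i => ?_, fun i => ?_⟩ <;>
  · have := hn i; have := hM i
    rcases le_total (u i) 0 with h | h
    · rw [max_eq_right h] at *; rw [abs_of_nonpos h] at *; omega
    · rw [max_eq_left h] at *; rw [abs_of_nonneg h] at *; omega

theorem card_filter_box_add_le (F : Set (Fin k → ℤ)) (a u : Fin k → ℤ) {M : ℕ}
    (hM : ∀ i, |u i| ≤ M) (N : ℕ) :
    #((box (a + u) N).filter (· ∈ F)) ≤ #((box a N).filter (· ∈ F)) + (N ^ k - (N - M) ^ k) := by
  have hinter : (N - M) ^ k ≤ #(box a N ∩ box (a + u) N) := by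
    rw [← card_box (a + fun i => max (u i) 0)]
    exact card_le_card (box_sub_subset_inter_box_add a u hM N)
  calc _ ≤ #((box a N).filter (· ∈ F)) + #(box (a + u) N \ box a N) :=
        card_filter_le_card_filter_add_card_sdiff _ _ _
    _ ≤ _ := by rw [card_sdiff, card_box]; omega

noncomputable def boxDensity (F : Set (Fin k → ℤ)) (a : Fin k → ℤ) (N : ℕ) : ℝ :=
  #((box a N).filter (· ∈ F)) / (N : ℝ) ^ k

theorem boxDensity_nonneg (F : Set (Fin k → ℤ)) (a : Fin k → ℤ) (N : ℕ) :
    0 ≤ boxDensity F a N := by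
  unfold boxDensity; positivity

theorem boxDensity_le_one (F : Set (Fin k → ℤ)) (a : Fin k → ℤ) (N : ℕ) :
    boxDensity F a N ≤ 1 := by
  refine div_le_one_of_le₀ ?_ (by positivity)
  exact_mod_cast (card_box a N).symm ▸ card_filter_le _ _

theorem boxDensity_union {F G : Set (Fin k → ℤ)} (h : Disjoint F G) (a : Fin k → ℤ) (N : ℕ) :
    boxDensity (F ∪ G) a N = boxDensity F a N + boxDensity G a N := by
  simp only [boxDensity, Set.mem_union, filter_or]
  rw [card_union_of_disjoint (disjoint_filter.2 fun n _ hF hG => Set.disjoint_left.1 h hF hG),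
    Nat.cast_add, add_div]

theorem boxDensity_univ (a : Fin k → ℤ) {N : ℕ} (hN : N ≠ 0) : boxDensity Set.univ a N = 1 := by
  simp only [boxDensity, Set.mem_univ, filter_true, card_box]
  push_cast
  exact div_self (by positivity)

theorem boxDensity_preimage_add (F : Set (Fin k → ℤ)) (a u : Fin k → ℤ) (N : ℕ) :
    boxDensity ((· + u) ⁻¹' F) a N = boxDensity F (a + u) N := by
  simp only [boxDensity, box_add, filter_map, card_map]
  rfl

theorem abs_boxDensity_add_sub_le (F : Set (Fin k → ℤ)) (a u : Fin k → ℤ) {M N : ℕ}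
    (hM : ∀ i, |u i| ≤ M) (hMN : M ≤ N) (hN : 0 < N) :
    |boxDensity F (a + u) N - boxDensity F a N| ≤ 1 - (1 - M / N : ℝ) ^ k := by
  have hle : (N - M) ^ k ≤ N ^ k := Nat.pow_le_pow_left (Nat.sub_le N M) k
  have hup := card_filter_box_add_le F a u hM N
  have hdown := card_filter_box_add_le F (a + u) (-u) (by simpa using hM) N
  rw [add_neg_cancel_right] at hdown
  have hNk : (0 : ℝ) < (N : ℝ) ^ k := by positivity
  have hbound : 1 - (1 - M / N : ℝ) ^ k = ((N ^ k - (N - M) ^ k : ℕ) : ℝ) / (N : ℝ) ^ k := by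
    rw [Nat.cast_sub hle]
    push_cast [Nat.cast_sub hMN]
    rw [sub_div, div_self hNk.ne', ← div_pow, sub_div, div_self (by positivity)]
  rw [hbound, boxDensity, boxDensity, ← sub_div, abs_div, abs_of_pos hNk]
  gcongr
  rw [abs_sub_le_iff, sub_le_iff_le_add', sub_le_iff_le_add']
  exact ⟨by exact_mod_cast hup, by exact_mod_cast hdown⟩

theorem tendsto_boxDensity_add_sub (F : Set (Fin k → ℤ)) (a : ℕ → Fin k → ℤ) (u : Fin k → ℤ) :
    Tendsto (fun N => boxDensity F (a N + u) N - boxDensity F (a N) N) atTop (𝓝 0) := by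
  set M := univ.sup fun i => (u i).natAbs
  have hM : ∀ i, |u i| ≤ M := fun i => by
    rw [Int.abs_eq_natAbs]; exact_mod_cast le_sup (f := fun i => (u i).natAbs) (mem_univ i)
  have hlim : Tendsto (fun N : ℕ => 1 - (1 - M / N : ℝ) ^ k) atTop (𝓝 0) := by
    simpa using (tendsto_const_nhds (x := (1 : ℝ))).sub
      (((tendsto_const_nhds (x := (1 : ℝ))).sub (tendsto_const_div_atTop_nhds_zero_nat (M : ℝ))).pow k)
  refine squeeze_zero_norm' ?_ hlim
  filter_upwards [eventually_ge_atTop (M + 1)] with N hN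
  exact abs_boxDensity_add_sub_le F (a N) u hM (by omega) (by omega)

end Box

section Density

variable {k : ℕ}

noncomputable def maxBoxDensity (F : Set (Fin k → ℤ)) (N : ℕ) : ℝ := ⨆ a, boxDensity F a N

theorem upperBanachDensityZ_eq_limsup (F : Set (Fin k → ℤ)) :
    upperBanachDensityZ F = limsup (maxBoxDensity F) atTop := rfl

theorem boxDensity_le_maxBoxDensity (F : Set (Fin k → ℤ)) (a : Fin k → ℤ) (N : ℕ) :
    boxDensity F a N ≤ maxBoxDensity F N :=
  le_ciSup ⟨1, Set.forall_mem_range.2 fun a => boxDensity_le_one F a N⟩ a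

theorem maxBoxDensity_mem_Icc (F : Set (Fin k → ℤ)) (N : ℕ) : maxBoxDensity F N ∈ Set.Icc 0 1 :=
  ⟨Real.iSup_nonneg fun a => boxDensity_nonneg F a N,
    Real.iSup_le (fun a => boxDensity_le_one F a N) zero_le_one⟩

noncomputable def ultraDensity (𝒰 : Ultrafilter ℕ) (a : ℕ → Fin k → ℤ) (F : Set (Fin k → ℤ)) :
    ℝ :=
  limUnder (𝒰 : Filter ℕ) fun N => boxDensity F (a N) N

variable (𝒰 : Ultrafilter ℕ) (a : ℕ → Fin k → ℤ)

theorem tendsto_ultraDensity (F : Set (Fin k → ℤ)) :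
    Tendsto (fun N => boxDensity F (a N) N) 𝒰 (𝓝 (ultraDensity 𝒰 a F)) :=
  𝒰.tendsto_limUnder_of_mem_Icc fun N => ⟨boxDensity_nonneg F _ N, boxDensity_le_one F _ N⟩

theorem ultraDensity_nonneg (F : Set (Fin k → ℤ)) : 0 ≤ ultraDensity 𝒰 a F :=
  ge_of_tendsto' (tendsto_ultraDensity 𝒰 a F) fun N => boxDensity_nonneg F _ N

theorem ultraDensity_union {F G : Set (Fin k → ℤ)} (h : Disjoint F G) :
    ultraDensity 𝒰 a (F ∪ G) = ultraDensity 𝒰 a F + ultraDensity 𝒰 a G :=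
  tendsto_nhds_unique (tendsto_ultraDensity 𝒰 a _) <|
    ((tendsto_ultraDensity 𝒰 a F).add (tendsto_ultraDensity 𝒰 a G)).congr fun N =>
      (boxDensity_union h _ N).symm

variable {𝒰}

theorem ultraDensity_univ (h𝒰 : (𝒰 : Filter ℕ) ≤ atTop) : ultraDensity 𝒰 a Set.univ = 1 :=
  tendsto_nhds_unique (tendsto_ultraDensity 𝒰 a _) <| tendsto_const_nhds.congr' <|
    ((eventually_ne_atTop 0).filter_mono h𝒰).mono fun _ hN => (boxDensity_univ _ hN).symm

theorem ultraDensity_preimage_add (h𝒰 : (𝒰 : Filter ℕ) ≤ atTop) (F : Set (Fin k → ℤ))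
    (u : Fin k → ℤ) : ultraDensity 𝒰 a ((· + u) ⁻¹' F) = ultraDensity 𝒰 a F := by
  refine tendsto_nhds_unique (tendsto_ultraDensity 𝒰 a _) ?_
  simpa [boxDensity_preimage_add] using
    (tendsto_ultraDensity 𝒰 a F).add ((tendsto_boxDensity_add_sub F a u).mono_left h𝒰)

theorem ultraDensity_le_upperBanachDensityZ (h𝒰 : (𝒰 : Filter ℕ) ≤ atTop)
    (F : Set (Fin k → ℤ)) : ultraDensity 𝒰 a F ≤ upperBanachDensityZ F := by
  have hbdd : IsBoundedUnder (· ≤ ·) atTop (maxBoxDensity F) :=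
    isBoundedUnder_of ⟨1, fun N => (maxBoxDensity_mem_Icc F N).2⟩
  rw [upperBanachDensityZ_eq_limsup]
  refine le_of_forall_lt_imp_le_of_dense fun b hb => le_limsup_of_frequently_le ?_ hbdd
  exact (((tendsto_ultraDensity 𝒰 a F).eventually (lt_mem_nhds hb)).mono fun N hN =>
    hN.le.trans (boxDensity_le_maxBoxDensity F _ N)).frequently.filter_mono h𝒰

theorem ultraDensity_eq_upperBanachDensityZ (h𝒰 : (𝒰 : Filter ℕ) ≤ atTop) {F : Set (Fin k → ℤ)}
    (hmax : Tendsto (maxBoxDensity F) 𝒰 (𝓝 (upperBanachDensityZ F)))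
    (ha : ∀ N, maxBoxDensity F N - 1 / (N + 1) < boxDensity F (a N) N) :
    ultraDensity 𝒰 a F = upperBanachDensityZ F := by
  refine tendsto_nhds_unique (tendsto_ultraDensity 𝒰 a F) ?_
  refine tendsto_of_tendsto_of_tendsto_of_le_of_le ?_ hmax (fun N => (ha N).le)
    (fun N => boxDensity_le_maxBoxDensity F (a N) N)
  simpa using hmax.sub (tendsto_one_div_add_atTop_nhds_zero_nat.mono_left h𝒰)


theorem exists_ultraDensity_eq_upperBanachDensityZ (F : Set (Fin k → ℤ)) :
    ∃ (𝒰 : Ultrafilter ℕ) (a : ℕ → Fin k → ℤ), (𝒰 : Filter ℕ) ≤ atTop ∧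
      ultraDensity 𝒰 a F = upperBanachDensityZ F := by
  obtain ⟨𝒰, h𝒰, hmax⟩ := exists_ultrafilter_tendsto_limsup (l := atTop) (f := maxBoxDensity F)
    (isBoundedUnder_of ⟨0, fun N => (maxBoxDensity_mem_Icc F N).1⟩).isCoboundedUnder_le
    (isBoundedUnder_of ⟨1, fun N => (maxBoxDensity_mem_Icc F N).2⟩)
  choose a ha using fun N : ℕ =>
    exists_lt_of_lt_ciSup (sub_lt_self (maxBoxDensity F N) Nat.one_div_pos_of_nat)
  rw [← upperBanachDensityZ_eq_limsup] at hmax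
  exact ⟨𝒰, a, h𝒰, ultraDensity_eq_upperBanachDensityZ a h𝒰 hmax ha⟩

end Density

section OrbitMeasure

variable {k : ℕ} (𝒰 : Ultrafilter ℕ) (a : ℕ → Fin k → ℤ) (x : (Fin k → ℤ) → Bool)

noncomputable def orbitMean (S : Set ((Fin k → ℤ) → Bool)) : ℝ≥0 :=
  (ultraDensity 𝒰 a {n | shift n x ∈ S}).toNNReal

theorem orbitMean_union (S S' : Set ((Fin k → ℤ) → Bool)) (h : Disjoint S S') :
    orbitMean 𝒰 a x (S ∪ S') = orbitMean 𝒰 a x S + orbitMean 𝒰 a x S' := by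
  unfold orbitMean
  rw [← Real.toNNReal_add (ultraDensity_nonneg 𝒰 a _) (ultraDensity_nonneg 𝒰 a _)]
  exact congrArg Real.toNNReal (ultraDensity_union 𝒰 a (h.preimage fun n => shift n x))

noncomputable def orbitMeasure : Measure ((Fin k → ℤ) → Bool) :=
  (Content.ofAdditive (orbitMean 𝒰 a x) (orbitMean_union 𝒰 a x)).measure

theorem orbitMeasure_toReal {S : Set ((Fin k → ℤ) → Bool)} (hS : IsClopen S) :
    (orbitMeasure 𝒰 a x S).toReal = ultraDensity 𝒰 a {n | shift n x ∈ S} := by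
  rw [orbitMeasure, Content.ofAdditive_measure_apply _ hS, ENNReal.coe_toReal, orbitMean,
    Real.coe_toNNReal _ (ultraDensity_nonneg 𝒰 a _)]

variable {𝒰}

theorem isProbabilityMeasure_orbitMeasure (h𝒰 : (𝒰 : Filter ℕ) ≤ atTop) :
    IsProbabilityMeasure (orbitMeasure 𝒰 a x) := by
  refine ⟨?_⟩
  rw [orbitMeasure, Content.ofAdditive_measure_apply _ isClopen_univ, orbitMean]
  simp [ultraDensity_univ a h𝒰]

theorem measurePreserving_shift_orbitMeasure (h𝒰 : (𝒰 : Filter ℕ) ≤ atTop) (u : Fin k → ℤ) :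
    MeasurePreserving (shift u) (orbitMeasure 𝒰 a x) (orbitMeasure 𝒰 a x) := by
  refine Content.measurePreserving_ofAdditive _ (shiftHomeomorph u) fun S => ?_
  have hreturn : {n | shift n x ∈ shiftHomeomorph u '' S} = (· + -u) ⁻¹' {n | shift n x ∈ S} := by
    rw [Homeomorph.image_eq_preimage_symm]
    ext n
    change shift (-u) (shift n x) ∈ S ↔ _
    rw [shift_shift, add_comm]
    rfl
  rw [orbitMean, orbitMean, hreturn, ultraDensity_preimage_add a h𝒰]

end OrbitMeasure

end Furstenberg

/-- The commuting transformations `T₁, …, T_k` are encoded as the `ℤᵏ`-action `T`, so that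
`∏ᵢ Tᵢ^{-d_{j,i}} A = (T d_j)⁻¹' A`. -/
theorem stmt19_general (k : ℕ) (E : Set (Fin k → ℤ)) :
    ∃ (X : Type) (_ : MeasurableSpace X) (μ : Measure X)
      (T : (Fin k → ℤ) → X → X) (A : Set X),
      IsProbabilityMeasure μ ∧
      T 0 = id ∧ (∀ u v : Fin k → ℤ, T (u + v) = T u ∘ T v) ∧
      (∀ u : Fin k → ℤ, MeasurePreserving (T u) μ μ) ∧
      MeasurableSet A ∧ (μ A).toReal = upperBanachDensityZ E ∧
      ∀ (m : ℕ) (d : Fin m → (Fin k → ℤ)),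
        upperBanachDensityZ (E ∩ ⋂ j : Fin m, {x | x + d j ∈ E}) ≥
          (μ (A ∩ ⋂ j : Fin m, T (d j) ⁻¹' A)).toReal := by
  obtain ⟨𝒰, a, h𝒰, hE⟩ := Furstenberg.exists_ultraDensity_eq_upperBanachDensityZ E
  let x : (Fin k → ℤ) → Bool := fun n => decide (n ∈ E)
  let A : Set ((Fin k → ℤ) → Bool) := {y | y 0 = true}
  have hA : IsClopen A := (isClopen_discrete {true}).preimage (continuous_apply 0)
  refine ⟨_, _, Furstenberg.orbitMeasure 𝒰 a x, Furstenberg.shift, A,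
    Furstenberg.isProbabilityMeasure_orbitMeasure a x h𝒰, Furstenberg.shift_zero,
    Furstenberg.shift_add, Furstenberg.measurePreserving_shift_orbitMeasure a x h𝒰,
    hA.isOpen.measurableSet, ?_, fun m d => ?_⟩
  · rw [Furstenberg.orbitMeasure_toReal 𝒰 a x hA, ← hE]
    congr 1
    ext n
    simp [x, A, Furstenberg.shift]
  · rw [Furstenberg.orbitMeasure_toReal 𝒰 a x <| hA.inter <| isClopen_iInter_of_finite fun j =>
      hA.preimage (Furstenberg.continuous_shift (d j))]
    convert Furstenberg.ultraDensity_le_upperBanachDensityZ a h𝒰 _ using 2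
    ext n
    simp [x, A, Furstenberg.shift, add_comm]

/-- Furstenberg's correspondence principle for `ℤᵏ`.  The `k` commuting invertible
measure preserving transformations `T₁, …, T_k` are packaged as a measure preserving
`ℤᵏ`-action `T`, so that `∏ᵢ Tᵢ^{-dᵢ} A = (T d)⁻¹' A`. -/
theorem stmt19 (k : ℕ) (hk : 0 < k) (E : Set (Fin k → ℤ)) :
    ∃ (X : Type) (_ : MeasurableSpace X) (μ : Measure X)
      (T : (Fin k → ℤ) → X → X) (A : Set X),
      IsProbabilityMeasure μ ∧
      T 0 = id ∧ (∀ u v : Fin k → ℤ, T (u + v) = T u ∘ T v) ∧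
      (∀ u : Fin k → ℤ, MeasurePreserving (T u) μ μ) ∧
      MeasurableSet A ∧ (μ A).toReal = upperBanachDensityZ E ∧
      ∀ (m : ℕ) (d : Fin m → (Fin k → ℤ)),
        upperBanachDensityZ (E ∩ ⋂ j : Fin m, {x | x + d j ∈ E}) ≥
          (μ (A ∩ ⋂ j : Fin m, T (d j) ⁻¹' A)).toReal :=
  stmt19_general k E
end
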